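/- Let ρ > 0, C₀ > 0, δ ∈ (0,1), and let α, β : [0,1] → ℂ be continuous with Re α(s) > ρ and |β(s)| ≤ C₀ for all s. Then there exist C₁ > 0 and t₁ > 0 depending only on C₀, ρ, δ such that: for any ε > 0, any t ≥ t₁, and any C¹ function f : [0,1] → ℂ satisfying sup|f| + sup|f′ + (tα+β)f| ≤ ε, one has sup_{s ∈ [δ,1]} |f(s)| ≤ C₁·ε·(1+t)⁻¹. -/

import Mathlib

/-!
Put `c = tα + β`, so that `Re c ≥ κ := tρ - C₀`. The integrating factor `E u = exp (∫ₛᵘ c)`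
turns the equation into `(E f)' = E (f' + c f)`, and `‖E u‖ ≤ e^{κ (u - s)}` for `u ≤ s`.
Comparing `‖E f‖` on `[s - δ, s]` with the real function whose derivative is `e^{κ (u - s)} ε₂`
gives `‖f s‖ ≤ e^{-κδ} ε₁ + ε₂ / κ ≤ ε / (κδ)`, and `κ ≥ ρ (1 + t) / 4` once `t ≥ max 1 (2C₀/ρ)`.
-/

open Set Complex MeasureTheory intervalIntegral

theorem ContinuousOn.exists_continuous_eqOn_Icc {α β : Type*} [LinearOrder α]
    [TopologicalSpace α] [OrderTopology α] [TopologicalSpace β] {f : α → β} {a b : α}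
    (hab : a ≤ b) (hf : ContinuousOn f (Icc a b)) :
    ∃ g : α → β, Continuous g ∧ EqOn g f (Icc a b) :=
  ⟨IccExtend hab ((Icc a b).domRestrict f), continuous_IccExtend_iff.2 hf.domRestrict,
    fun _ hx => IccExtend_of_mem hab _ hx⟩

theorem norm_cexp_integral_le {c : ℝ → ℂ} {u b κ : ℝ} (hc : IntervalIntegrable c volume u b)
    (hub : u ≤ b) (hκ : ∀ v ∈ Icc u b, κ ≤ (c v).re) :
    ‖exp (∫ v in b..u, c v)‖ ≤ Real.exp (κ * (u - b)) := by
  have hre : (b - u) * κ ≤ (∫ v in u..b, c v).re := by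
    rw [← RCLike.re_to_complex, ← intervalIntegral_re hc]
    simpa using integral_mono_on hub intervalIntegrable_const ⟨hc.1.re, hc.2.re⟩ hκ
  rw [norm_exp, integral_symm, neg_re]
  gcongr
  linarith

theorem hasDerivAt_cexp_integral_mul {c f : ℝ → ℂ} {f' : ℂ} {b x : ℝ} (hc : Continuous c)
    (hf : HasDerivAt f f' x) :
    HasDerivAt (fun u => exp (∫ v in b..u, c v) * f u)
      (exp (∫ v in b..x, c v) * (f' + c x * f x)) x := by
  have hI : HasDerivAt (fun u => ∫ v in b..u, c v) (c x) x :=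
    hc.integral_hasStrictDerivAt b x |>.hasDerivAt
  exact (hI.cexp.mul hf).congr_deriv (by ring)

theorem norm_le_exp_mul_add_div_of_norm_deriv_add_mul_le {c f f' : ℝ → ℂ} {a b κ ε : ℝ}
    (hab : a ≤ b) (hκ : 0 < κ) (hc : ContinuousOn c (Icc a b))
    (hcκ : ∀ u ∈ Icc a b, κ ≤ (c u).re) (hf : ∀ u ∈ Icc a b, HasDerivAt f (f' u) u)
    (hε : ∀ u ∈ Icc a b, ‖f' u + c u * f u‖ ≤ ε) :
    ‖f b‖ ≤ Real.exp (-κ * (b - a)) * ‖f a‖ + ε / κ := by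
  obtain ⟨c', hc'_cont, hc'c⟩ := hc.exists_continuous_eqOn_Icc hab
  set E : ℝ → ℂ := fun u => exp (∫ v in b..u, c' v)
  have hE : ∀ u ∈ Icc a b, ‖E u‖ ≤ Real.exp (κ * (u - b)) := fun u hu =>
    norm_cexp_integral_le (hc'_cont.intervalIntegrable _ _) hu.2 fun v hv =>
      (hc'c (Icc_subset_Icc_left hu.1 hv)).symm ▸ hcκ v (Icc_subset_Icc_left hu.1 hv)
  have hEf : ∀ u ∈ Icc a b, HasDerivAt (fun u => E u * f u) (E u * (f' u + c u * f u)) u :=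
    fun u hu => hc'c hu ▸ hasDerivAt_cexp_integral_mul hc'_cont (hf u hu)
  set B : ℝ → ℝ := fun u => Real.exp (-κ * (b - a)) * ‖f a‖ + Real.exp (κ * (u - b)) * ε / κ
  have hB : ∀ u, HasDerivAt B (Real.exp (κ * (u - b)) * ε) u := fun u => by
    have := (((hasDerivAt_id u).sub_const b).const_mul κ).exp.mul_const ε |>.div_const κ
    exact (this.const_add _).congr_deriv (by simp only [id]; field_simp)
  have hε0 : 0 ≤ ε := (norm_nonneg _).trans (hε a (left_mem_Icc.2 hab))
  have ha : ‖E a * f a‖ ≤ B a :=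
    calc ‖E a * f a‖ ≤ Real.exp (-κ * (b - a)) * ‖f a‖ := by
          rw [norm_mul, show -κ * (b - a) = κ * (a - b) by ring]
          gcongr
          exact hE a (left_mem_Icc.2 hab)
      _ ≤ _ := le_add_of_nonneg_right (by positivity)
  have hbound : ∀ u ∈ Ico a b, ‖E u * (f' u + c u * f u)‖ ≤ Real.exp (κ * (u - b)) * ε := by
    intro u hu
    rw [norm_mul]
    gcongr
    exacts [hE u (Ico_subset_Icc_self hu), hε u (Ico_subset_Icc_self hu)]
  have key := image_norm_le_of_norm_deriv_right_le_deriv_boundary'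
    (fun u hu => (hEf u hu).continuousAt.continuousWithinAt)
    (fun u hu => (hEf u (Ico_subset_Icc_self hu)).hasDerivWithinAt)
    ha (fun u _ => (hB u).continuousAt.continuousWithinAt) (fun u _ => (hB u).hasDerivWithinAt)
    hbound (right_mem_Icc.2 hab)
  simpa [E, B] using key

theorem Real.exp_neg_mul_mul_add_div_le {κ δ x y : ℝ} (hκ : 0 < κ) (hδ : 0 < δ) (hδ1 : δ ≤ 1)
    (hx : 0 ≤ x) (hy : 0 ≤ y) : Real.exp (-κ * δ) * x + y / κ ≤ (x + y) / (κ * δ) := by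
  have hexp : Real.exp (-κ * δ) ≤ (κ * δ)⁻¹ := by
    rw [neg_mul, Real.exp_neg]
    gcongr
    linarith [Real.add_one_le_exp (κ * δ)]
  calc Real.exp (-κ * δ) * x + y / κ ≤ (κ * δ)⁻¹ * x + y / (κ * δ) := by
        gcongr
        exact mul_le_of_le_one_right hκ.le hδ1
    _ = (x + y) / (κ * δ) := by ring

theorem singular_perturbation_estimate_general (ρ C₀ δ : ℝ)
    (hρ : 0 < ρ) (hδ : δ ∈ Set.Ioo (0 : ℝ) 1) :
    ∃ C₁ > (0 : ℝ), ∃ t₁ > (0 : ℝ),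
      ∀ (α β : ℝ → ℂ), ContinuousOn α (Set.Icc 0 1) →
        ContinuousOn β (Set.Icc 0 1) →
        (∀ s ∈ Set.Icc (0 : ℝ) 1, ρ < (α s).re) →
        (∀ s ∈ Set.Icc (0 : ℝ) 1, ‖β s‖ ≤ C₀) →
        ∀ ε > (0 : ℝ), ∀ t ≥ t₁, ∀ (f f' : ℝ → ℂ),
          (∀ s ∈ Set.Icc (0 : ℝ) 1, HasDerivAt f (f' s) s) →
          ∀ ε₁ ε₂ : ℝ,
            (∀ s ∈ Set.Icc (0 : ℝ) 1, ‖f s‖ ≤ ε₁) →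
            (∀ s ∈ Set.Icc (0 : ℝ) 1,
              ‖f' s + ((t : ℂ) * α s + β s) * f s‖ ≤ ε₂) →
            ε₁ + ε₂ ≤ ε →
            ∀ s ∈ Set.Icc δ 1, ‖f s‖ ≤ C₁ * ε * (1 + t)⁻¹ := by
  obtain ⟨hδ0, hδ1⟩ := hδ
  refine ⟨4 / (ρ * δ), by positivity, max 1 (2 * C₀ / ρ), lt_max_of_lt_left one_pos, ?_⟩
  intro α β hαc hβc hα hβ ε hε t ht f f' hf ε₁ ε₂ hε₁ hε₂ hsum s ⟨hδs, hs1⟩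
  have ht1 : 1 ≤ t := (le_max_left _ _).trans ht
  have htC₀ : 2 * C₀ ≤ t * ρ := (div_le_iff₀ hρ).1 ((le_max_right _ _).trans ht)
  set κ := t * ρ - C₀
  have hκ : ρ * (1 + t) / 4 ≤ κ := by nlinarith
  have hκ0 : 0 < κ := lt_of_lt_of_le (by positivity) hκ
  have hre : ∀ u ∈ Icc (0 : ℝ) 1, κ ≤ ((t : ℂ) * α u + β u).re := fun u hu => by
    rw [add_re, re_ofReal_mul]
    nlinarith [hα u hu, hβ u hu, abs_le.1 ((abs_re_le_norm (β u)).trans (hβ u hu))]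
  have hsub : Icc (s - δ) s ⊆ Icc 0 1 := Icc_subset_Icc (by linarith) hs1
  have hdecay := norm_le_exp_mul_add_div_of_norm_deriv_add_mul_le (by linarith : s - δ ≤ s) hκ0
    ((continuousOn_const.mul hαc).add hβc |>.mono hsub) (fun u hu => hre u (hsub hu))
    (fun u hu => hf u (hsub hu)) (fun u hu => hε₂ u (hsub hu))
  have hε₁0 : 0 ≤ ε₁ := (norm_nonneg _).trans (hε₁ s ⟨by linarith, hs1⟩)
  have hε₂0 : 0 ≤ ε₂ := (norm_nonneg _).trans (hε₂ s ⟨by linarith, hs1⟩)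
  calc ‖f s‖ ≤ Real.exp (-κ * δ) * ε₁ + ε₂ / κ := by
        rw [sub_sub_cancel] at hdecay
        exact hdecay.trans (by gcongr; exact hε₁ _ (hsub (left_mem_Icc.2 (by linarith))))
    _ ≤ (ε₁ + ε₂) / (κ * δ) := Real.exp_neg_mul_mul_add_div_le hκ0 hδ0 hδ1.le hε₁0 hε₂0
    _ ≤ ε / (ρ * (1 + t) / 4 * δ) := by gcongr
    _ = 4 / (ρ * δ) * ε * (1 + t)⁻¹ := by field_simp

/-- Singular perturbation estimate: if Re α > ρ on [0,1], |β| ≤ C₀, then there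
exist C₁, t₁ > 0 depending only on C₀, ρ, δ such that for any t ≥ t₁ and any C¹
function f with sup|f| + sup|f′+(tα+β)f| ≤ ε (encoded via bounds ε₁ + ε₂ ≤ ε),
one has |f| ≤ C₁·ε·(1+t)⁻¹ on [δ,1]. -/
theorem singular_perturbation_estimate (ρ C₀ δ : ℝ)
    (hρ : 0 < ρ) (hC₀ : 0 < C₀) (hδ : δ ∈ Set.Ioo (0 : ℝ) 1) :
    ∃ C₁ > (0 : ℝ), ∃ t₁ > (0 : ℝ),
      ∀ (α β : ℝ → ℂ), ContinuousOn α (Set.Icc 0 1) →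
        ContinuousOn β (Set.Icc 0 1) →
        (∀ s ∈ Set.Icc (0 : ℝ) 1, ρ < (α s).re) →
        (∀ s ∈ Set.Icc (0 : ℝ) 1, ‖β s‖ ≤ C₀) →
        ∀ ε > (0 : ℝ), ∀ t ≥ t₁, ∀ (f f' : ℝ → ℂ),
          (∀ s ∈ Set.Icc (0 : ℝ) 1, HasDerivAt f (f' s) s) →
          ∀ ε₁ ε₂ : ℝ,
            (∀ s ∈ Set.Icc (0 : ℝ) 1, ‖f s‖ ≤ ε₁) →
            (∀ s ∈ Set.Icc (0 : ℝ) 1,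
              ‖f' s + ((t : ℂ) * α s + β s) * f s‖ ≤ ε₂) →
            ε₁ + ε₂ ≤ ε →
            ∀ s ∈ Set.Icc δ 1, ‖f s‖ ≤ C₁ * ε * (1 + t)⁻¹ :=
  singular_perturbation_estimate_general ρ C₀ δ hρ hδ
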